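/- arXiv:2605.14463 — 2 statements merged into one kernel-verified Lean document; each statement's English description precedes it below -/
import Mathlib

section
/- Under the permutation null, Cov(α_1(t), β_2(t)) = C_{12}/(n(n-1)(n-2)(n-3)) − k̄_1 k̄_2, where k̄_x = (1/(n(n-1))) Σ_{i≠j} k_{xij} for x ∈ {1,2}. -/
open Finset

/-! Permutations act transitively on injective tuples, so for a uniform `π` and pairwise distinct
`i, j, u, v` the tuple `(π i, π j, π u, π v)` is uniform over the injective 4-tuples, and
`(π i, π j)` over the injective pairs. Thus `E[K₁(π i, π j) K₂(π u, π v)] = C₁₂ / (n)₄` and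
`E[K(π i, π j)] = k̄`. Since `α₁(t)` and `β₂(t)` average over pairs taken in the disjoint segments
`{i < t}` and `{i ≥ t}`, linearity gives `E[α₁ β₂] = C₁₂ / (n)₄` and `E[α₁] E[β₂] = k̄₁ k̄₂`. -/

/-- Expectation under the uniform permutation null distribution. -/
noncomputable def permExp (n : ℕ) (f : Equiv.Perm (Fin n) → ℝ) : ℝ :=
  (∑ π : Equiv.Perm (Fin n), f π) / (Fintype.card (Equiv.Perm (Fin n)) : ℝ)

/-- Within-segment ordered-pair kernel average. -/
noncomputable def alphaStat (n t : ℕ) (K : Fin n → Fin n → ℝ)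
    (π : Equiv.Perm (Fin n)) : ℝ :=
  (1 / ((t : ℝ) * ((t : ℝ) - 1))) *
    ∑ i : Fin n, ∑ j : Fin n,
      if i ≠ j ∧ (i : ℕ) < t ∧ (j : ℕ) < t then K (π i) (π j) else 0

/-- After-segment ordered-pair kernel average. -/
noncomputable def betaStat (n t : ℕ) (K : Fin n → Fin n → ℝ)
    (π : Equiv.Perm (Fin n)) : ℝ :=
  (1 / (((n : ℝ) - t) * ((n : ℝ) - t - 1))) *
    ∑ i : Fin n, ∑ j : Fin n,
      if i ≠ j ∧ t ≤ (i : ℕ) ∧ t ≤ (j : ℕ) then K (π i) (π j) else 0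

theorem Nat.cast_descFactorial_four (n : ℕ) :
    (n.descFactorial 4 : ℝ) = n * (n - 1) * (n - 2) * (n - 3) := by
  rcases n with _ | _ | _ | _ | n <;> simp [Nat.descFactorial_succ]; ring

theorem Finset.cast_card_offDiag {α : Type*} [DecidableEq α] (s : Finset α) :
    (#s.offDiag : ℝ) = #s * (#s - 1) := by
  rw [offDiag_card, Nat.cast_sub (Nat.le_mul_self _)]
  push_cast
  ring

theorem Finset.cast_card_offDiag_ne_zero {α : Type*} [DecidableEq α] {s : Finset α}
    (hs : 1 < #s) : (#s.offDiag : ℝ) ≠ 0 := by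
  have : (1 : ℝ) < #s := by exact_mod_cast hs
  rw [cast_card_offDiag]
  exact mul_ne_zero (by positivity) (by linarith)

theorem Fin.card_filter_le_val {n t : ℕ} (htn : t ≤ n) :
    #{i : Fin n | t ≤ (i : ℕ)} = n - t := by
  have := card_filter_add_card_filter_not (s := univ) (fun i : Fin n => (i : ℕ) < t)
  simp only [not_lt, card_univ, Fintype.card_fin, Fin.card_filter_val_lt, min_eq_right htn] at this
  omega

theorem Finset.sum_sum_ite_eq_sum_offDiag_filter {α : Type*} [Fintype α] [DecidableEq α]
    (p : α → Prop) [DecidablePred p] (G : α → α → ℝ) :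
    ∑ i, ∑ j, (if i ≠ j ∧ p i ∧ p j then G i j else 0)
      = ∑ x ∈ (univ.filter p).offDiag, G x.1 x.2 := by
  rw [← Fintype.sum_prod_type' (fun i j => if i ≠ j ∧ p i ∧ p j then G i j else 0),
    ← sum_filter]
  congr 1
  ext x
  simp only [mem_filter, mem_univ, true_and, mem_offDiag]
  tauto

section PermInvariance

variable {ι α : Type*} [Fintype ι] [Fintype α] [DecidableEq α]

theorem card_embedding_mul_sum_perm_smul (f : ι ↪ α) (F : (ι ↪ α) → ℝ) :
    Fintype.card (ι ↪ α) * ∑ π : Equiv.Perm α, F (π • f)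
      = Fintype.card (Equiv.Perm α) * ∑ g : ι ↪ α, F g := by
  have orbit (g : ι ↪ α) : ∑ π : Equiv.Perm α, F (π • g) = ∑ π : Equiv.Perm α, F (π • f) := by
    obtain ⟨σ, rfl⟩ := Equiv.Perm.exists_smul_eq_embedding f g
    simp only [smul_smul]
    exact Equiv.sum_comp (Equiv.mulRight σ) (fun π => F (π • f))
  calc Fintype.card (ι ↪ α) * ∑ π : Equiv.Perm α, F (π • f)
      = ∑ g : ι ↪ α, ∑ π : Equiv.Perm α, F (π • g) := by simp [orbit]
    _ = ∑ π : Equiv.Perm α, ∑ g : ι ↪ α, F (π • g) := sum_comm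
    _ = ∑ _π : Equiv.Perm α, ∑ g : ι ↪ α, F g :=
        sum_congr rfl fun π _ => Equiv.sum_comp (MulAction.toPerm π) F
    _ = Fintype.card (Equiv.Perm α) * ∑ g : ι ↪ α, F g := by simp

theorem sum_embedding_eq_sum_injective [DecidableEq ι] (F : (ι → α) → ℝ) :
    ∑ g : ι ↪ α, F g = ∑ g : ι → α, if Function.Injective g then F g else 0 := by
  rw [← sum_filter, ← (Equiv.subtypeInjectiveEquivEmbedding ι α).sum_comp]
  exact (sum_subtype _ (fun g => by simp) _).symm

end PermInvariance

theorem Fin.sum_pi_succ {α : Type*} [Fintype α] {k : ℕ} (G : (Fin (k + 1) → α) → ℝ) :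
    ∑ g, G g = ∑ a, ∑ g : Fin k → α, G (Fin.cons a g) :=
  ((Fin.consEquiv fun _ => α).sum_comp G).symm.trans (Fintype.sum_prod_type _)

section Tuples

variable {α : Type*}

theorem injective_quadruple_iff_ne {a b c d : α} :
    Function.Injective ![a, b, c, d] ↔ a ≠ b ∧ c ≠ d ∧ c ≠ a ∧ c ≠ b ∧ d ≠ a ∧ d ≠ b := by
  simp only [Matrix.vecCons, Fin.cons_injective_iff, Set.mem_range, Fin.exists_fin_succ,
    Fin.cons_zero, Fin.cons_succ, IsEmpty.exists_iff, or_false,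
    Function.injective_of_subsingleton, and_true]
  tauto

variable [Fintype α] [DecidableEq α]

theorem sum_embedding_fin_two (G : α → α → ℝ) :
    ∑ g : Fin 2 ↪ α, G (g 0) (g 1) = ∑ a, ∑ b, if a ≠ b then G a b else 0 := by
  rw [sum_embedding_eq_sum_injective (fun g => G (g 0) (g 1))]
  simp only [Fin.sum_pi_succ, Fintype.sum_subsingleton _ ![]]
  exact Fintype.sum_congr _ _ fun a => Fintype.sum_congr _ _ fun b =>
    if_congr injective_pair_iff_ne rfl rfl

theorem sum_embedding_fin_four (G : α → α → α → α → ℝ) :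
    ∑ g : Fin 4 ↪ α, G (g 0) (g 1) (g 2) (g 3) = ∑ a, ∑ b, ∑ c, ∑ d,
      if a ≠ b ∧ c ≠ d ∧ c ≠ a ∧ c ≠ b ∧ d ≠ a ∧ d ≠ b then G a b c d else 0 := by
  rw [sum_embedding_eq_sum_injective (fun g => G (g 0) (g 1) (g 2) (g 3))]
  simp only [Fin.sum_pi_succ, Fintype.sum_subsingleton _ ![]]
  exact Fintype.sum_congr _ _ fun a => Fintype.sum_congr _ _ fun b =>
    Fintype.sum_congr _ _ fun c => Fintype.sum_congr _ _ fun d =>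
      if_congr injective_quadruple_iff_ne rfl rfl

end Tuples

section PermExp

variable {n : ℕ}

theorem permExp_sum {ι : Type*} (s : Finset ι) (f : ι → Equiv.Perm (Fin n) → ℝ) :
    permExp n (fun π => ∑ x ∈ s, f x π) = ∑ x ∈ s, permExp n (f x) := by
  simp only [permExp, sum_div]
  exact sum_comm

theorem permExp_div_const (f : Equiv.Perm (Fin n) → ℝ) (c : ℝ) :
    permExp n (fun π => f π / c) = permExp n f / c := by
  simp only [permExp, ← sum_div, div_right_comm]

theorem permExp_smul_embedding {k : ℕ} (f : Fin k ↪ Fin n) (F : (Fin k ↪ Fin n) → ℝ) :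
    permExp n (fun π => F (π • f)) = (∑ g, F g) / n.descFactorial k := by
  have hcard : Fintype.card (Fin k ↪ Fin n) = n.descFactorial k := by
    simp [Fintype.card_embedding_eq]
  have hpos : (n.descFactorial k : ℝ) ≠ 0 := by
    rw [← hcard]
    exact_mod_cast (Fintype.card_pos_iff.2 ⟨f⟩).ne'
  have key := card_embedding_mul_sum_perm_smul f F
  rw [hcard] at key
  rw [permExp, div_eq_div_iff (Nat.cast_ne_zero.2 Fintype.card_ne_zero) hpos]
  linarith

theorem permExp_apply_pair {i j : Fin n} (hij : i ≠ j) (K : Fin n → Fin n → ℝ) :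
    permExp n (fun π => K (π i) (π j))
      = (∑ a, ∑ b, if a ≠ b then K a b else 0) / (n * (n - 1)) := by
  have := permExp_smul_embedding ⟨![i, j], injective_pair_iff_ne.2 hij⟩ fun g => K (g 0) (g 1)
  rw [sum_embedding_fin_two, Nat.cast_descFactorial_two] at this
  simpa using this

theorem permExp_apply_quad {i j u v : Fin n} (hij : i ≠ j) (huv : u ≠ v) (hui : u ≠ i)
    (huj : u ≠ j) (hvi : v ≠ i) (hvj : v ≠ j) (K₁ K₂ : Fin n → Fin n → ℝ) :
    permExp n (fun π => K₁ (π i) (π j) * K₂ (π u) (π v))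
      = (∑ a, ∑ b, ∑ c, ∑ d, if a ≠ b ∧ c ≠ d ∧ c ≠ a ∧ c ≠ b ∧ d ≠ a ∧ d ≠ b
          then K₁ a b * K₂ c d else 0) / (n * (n - 1) * (n - 2) * (n - 3)) := by
  have := permExp_smul_embedding
    ⟨![i, j, u, v], injective_quadruple_iff_ne.2 ⟨hij, huv, hui, huj, hvi, hvj⟩⟩
    fun g => K₁ (g 0) (g 1) * K₂ (g 2) (g 3)
  rw [sum_embedding_fin_four (fun a b c d => K₁ a b * K₂ c d), Nat.cast_descFactorial_four]
    at this
  simpa using this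

end PermExp

noncomputable def pairAvg {α : Type*} [DecidableEq α] (s : Finset α) (K : α → α → ℝ)
    (π : Equiv.Perm α) : ℝ :=
  (∑ x ∈ s.offDiag, K (π x.1) (π x.2)) / #s.offDiag

section PairAvg

variable {n : ℕ} {s s' : Finset (Fin n)}

theorem permExp_pairAvg (hs : 1 < #s) (K : Fin n → Fin n → ℝ) :
    permExp n (pairAvg s K) = (∑ a, ∑ b, if a ≠ b then K a b else 0) / (n * (n - 1)) := by
  unfold pairAvg
  rw [permExp_div_const, permExp_sum,
    sum_congr rfl fun x hx => permExp_apply_pair (mem_offDiag.1 hx).2.2 K, sum_const,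
    nsmul_eq_mul, mul_div_cancel_left₀ _ (cast_card_offDiag_ne_zero hs)]

theorem permExp_pairAvg_mul_pairAvg (hs : 1 < #s) (hs' : 1 < #s') (hss' : Disjoint s s')
    (K₁ K₂ : Fin n → Fin n → ℝ) :
    permExp n (fun π => pairAvg s K₁ π * pairAvg s' K₂ π)
      = (∑ a, ∑ b, ∑ c, ∑ d, if a ≠ b ∧ c ≠ d ∧ c ≠ a ∧ c ≠ b ∧ d ≠ a ∧ d ≠ b
          then K₁ a b * K₂ c d else 0) / (n * (n - 1) * (n - 2) * (n - 3)) := by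
  have term {x y : Fin n × Fin n} (hx : x ∈ s.offDiag) (hy : y ∈ s'.offDiag) :=
    have ⟨hx₁, hx₂, hx⟩ := mem_offDiag.1 hx
    have ⟨hy₁, hy₂, hy⟩ := mem_offDiag.1 hy
    permExp_apply_quad hx hy (hss'.forall_ne_finset hx₁ hy₁).symm
      (hss'.forall_ne_finset hx₂ hy₁).symm (hss'.forall_ne_finset hx₁ hy₂).symm
      (hss'.forall_ne_finset hx₂ hy₂).symm K₁ K₂
  simp only [pairAvg, div_mul_div_comm, sum_mul_sum, permExp_div_const, permExp_sum]
  rw [sum_congr rfl fun x hx => sum_congr rfl fun y hy => term hx hy]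
  simp only [sum_const, nsmul_eq_mul, ← mul_assoc]
  exact mul_div_cancel_left₀ _
    (mul_ne_zero (cast_card_offDiag_ne_zero hs) (cast_card_offDiag_ne_zero hs'))

end PairAvg

theorem alphaStat_eq_pairAvg {n t : ℕ} (htn : t ≤ n) (K : Fin n → Fin n → ℝ) :
    alphaStat n t K = pairAvg {i : Fin n | (i : ℕ) < t} K := by
  ext π
  rw [alphaStat, pairAvg, sum_sum_ite_eq_sum_offDiag_filter, cast_card_offDiag,
    Fin.card_filter_val_lt, min_eq_right htn, one_div_mul_eq_div]

theorem betaStat_eq_pairAvg {n t : ℕ} (htn : t ≤ n) (K : Fin n → Fin n → ℝ) :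
    betaStat n t K = pairAvg {i : Fin n | t ≤ (i : ℕ)} K := by
  ext π
  rw [betaStat, pairAvg, sum_sum_ite_eq_sum_offDiag_filter, cast_card_offDiag,
    Fin.card_filter_le_val htn, Nat.cast_sub htn, one_div_mul_eq_div]

theorem cov_alpha_beta_general (n t : ℕ) (ht : 2 ≤ t) (htn : t + 2 ≤ n)
    (K₁ K₂ : Fin n → Fin n → ℝ) :
    permExp n (fun π => alphaStat n t K₁ π * betaStat n t K₂ π)
      - permExp n (alphaStat n t K₁) * permExp n (betaStat n t K₂)
    = (∑ i : Fin n, ∑ j : Fin n, ∑ u : Fin n, ∑ v : Fin n,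
        if i ≠ j ∧ u ≠ v ∧ u ≠ i ∧ u ≠ j ∧ v ≠ i ∧ v ≠ j
        then K₁ i j * K₂ u v else 0)
        / ((n : ℝ) * ((n : ℝ) - 1) * ((n : ℝ) - 2) * ((n : ℝ) - 3))
      - ((1 / ((n : ℝ) * ((n : ℝ) - 1))) *
          ∑ i : Fin n, ∑ j : Fin n, if i ≠ j then K₁ i j else 0) *
        ((1 / ((n : ℝ) * ((n : ℝ) - 1))) *
          ∑ i : Fin n, ∑ j : Fin n, if i ≠ j then K₂ i j else 0) := by
  have hle : t ≤ n := by omega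
  have hlow : 1 < #{i : Fin n | (i : ℕ) < t} := by
    rw [Fin.card_filter_val_lt, min_eq_right hle]
    omega
  have hupp : 1 < #{i : Fin n | t ≤ (i : ℕ)} := by
    rw [Fin.card_filter_le_val hle]
    omega
  have hdisj : Disjoint (univ.filter fun i : Fin n => (i : ℕ) < t)
      (univ.filter fun i : Fin n => t ≤ (i : ℕ)) :=
    disjoint_filter.2 fun _ _ => not_le.2
  rw [alphaStat_eq_pairAvg hle, betaStat_eq_pairAvg hle,
    permExp_pairAvg_mul_pairAvg hlow hupp hdisj, permExp_pairAvg hlow, permExp_pairAvg hupp]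
  ring

theorem cov_alpha_beta (n t : ℕ) (ht : 2 ≤ t) (htn : t + 2 ≤ n)
    (K₁ K₂ : Fin n → Fin n → ℝ)
    (hsymm₁ : ∀ i j, K₁ i j = K₁ j i) (hdiag₁ : ∀ i, K₁ i i = 0)
    (hsymm₂ : ∀ i j, K₂ i j = K₂ j i) (hdiag₂ : ∀ i, K₂ i i = 0) :
    permExp n (fun π => alphaStat n t K₁ π * betaStat n t K₂ π)
      - permExp n (alphaStat n t K₁) * permExp n (betaStat n t K₂)
    = (∑ i : Fin n, ∑ j : Fin n, ∑ u : Fin n, ∑ v : Fin n,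
        if i ≠ j ∧ u ≠ v ∧ u ≠ i ∧ u ≠ j ∧ v ≠ i ∧ v ≠ j
        then K₁ i j * K₂ u v else 0)
        / ((n : ℝ) * ((n : ℝ) - 1) * ((n : ℝ) - 2) * ((n : ℝ) - 3))
      - ((1 / ((n : ℝ) * ((n : ℝ) - 1))) *
          ∑ i : Fin n, ∑ j : Fin n, if i ≠ j then K₁ i j else 0) *
        ((1 / ((n : ℝ) * ((n : ℝ) - 1))) *
          ∑ i : Fin n, ∑ j : Fin n, if i ≠ j then K₂ i j else 0) :=
  cov_alpha_beta_general n t ht htn K₁ K₂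
end

section
/- Under the permutation null, with symmetric kernels, t²(t-1)² E[α_1(t) α_2(t)] = 2 A_{12} p_1(t) + 4 B_{12} p_2(t) + C_{12} p_3(t), where p_1(t) = t(t-1)/(n(n-1)), p_2(t) = p_1(t)(t-2)/(n-2), p_3(t) = p_2(t)(t-3)/(n-3), A_{12} = Σ_{i≠j} k_{1ij} k_{2ij}, B_{12} = Σ over triples of pairwise distinct (i,j,u) of k_{1ij} k_{2iu}, and C_{12} = Σ over quadruples of pairwise distinct (i,j,u,v) of k_{1ij} k_{2uv}. -/
open Finset Function

section Aux

lemma expAux_exists_perm_comp {n d : ℕ} (v w : Fin d → Fin n) (hv : Injective v)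
    (hw : Injective w) : ∃ π : Equiv.Perm (Fin n), ∀ k, π (v k) = w k := by
  classical
  let f : Fin n → Fin n := fun x => if h : ∃ k, v k = x then w h.choose else x
  have hf : ∀ k, f (v k) = w k := by
    intro k
    have h : ∃ k', v k' = v k := ⟨k, rfl⟩
    have : h.choose = k := hv h.choose_spec
    simp [f, dif_pos h, this]
  have hfs : Set.InjOn f (Finset.image v Finset.univ) := by
    intro x hx y hy hxy
    simp only [coe_image, Set.mem_image, mem_coe] at hx hy
    obtain ⟨k, -, rfl⟩ := hx
    obtain ⟨l, -, rfl⟩ := hy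
    rw [hf, hf] at hxy
    exact congrArg v (hw hxy)
  obtain ⟨g, hg⟩ := Finset.exists_equiv_extend_of_card_eq
    (t := (Finset.univ : Finset (Fin n)))
    (by simp) (f := f) (by simp) hfs
  refine ⟨g.trans (Equiv.subtypeUnivEquiv (by simp)), fun k => ?_⟩
  have := hg (v k) (by simp [Finset.mem_image])
  simp [Equiv.subtypeUnivEquiv, this, hf k]

lemma expAux_card_not_range {n d : ℕ} (v : Fin d → Fin n) (hv : Injective v) :
    Fintype.card {x : Fin n // x ∉ Set.range v} = n - d := by
  classical
  rw [Fintype.card_subtype_compl, Set.card_range_of_injective hv, Fintype.card_fin,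
    Fintype.card_fin]

lemma expAux_card_stab {n d : ℕ} (v : Fin d → Fin n) (hv : Injective v) :
    (Finset.univ.filter (fun σ : Equiv.Perm (Fin n) => ∀ k, σ (v k) = v k)).card
      = (n - d).factorial := by
  classical
  rw [← Fintype.card_subtype]
  have e1 : {σ : Equiv.Perm (Fin n) // ∀ k, σ (v k) = v k}
      ≃ {σ : Equiv.Perm (Fin n) // ∀ x, ¬ (x ∉ Set.range v) → σ x = x} := by
    refine Equiv.subtypeEquivRight fun σ => ?_
    constructor
    · rintro h x hx
      obtain ⟨k, rfl⟩ := not_not.1 hx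
      exact h k
    · intro h k
      exact h (v k) (by simp)
  have e2 := Equiv.Perm.subtypeEquivSubtypePerm (fun x : Fin n => x ∉ Set.range v)
  rw [Fintype.card_congr (e1.trans e2.symm), Fintype.card_perm,
    expAux_card_not_range v hv]

lemma expAux_card_fiber {n d : ℕ} (v w : Fin d → Fin n) (hv : Injective v)
    (hw : Injective w) :
    (Finset.univ.filter (fun π : Equiv.Perm (Fin n) => ∀ k, π (v k) = w k)).card
      = (n - d).factorial := by
  classical
  obtain ⟨π₀, hπ₀⟩ := expAux_exists_perm_comp v w hv hw
  rw [← expAux_card_stab v hv]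
  apply Finset.card_bij' (fun π _ => π₀⁻¹ * π) (fun σ _ => π₀ * σ)
  · intro π hπ
    simp only [mem_filter, mem_univ, true_and] at hπ ⊢
    intro k
    simp [Equiv.Perm.mul_apply, hπ k, ← hπ₀ k]
  · intro σ hσ
    simp only [mem_filter, mem_univ, true_and] at hσ ⊢
    intro k
    simp [Equiv.Perm.mul_apply, hσ k, hπ₀ k]
  · intro π _; simp [mul_assoc]
  · intro σ _; simp [← mul_assoc]

lemma expAux_sum_perm_comp {n d : ℕ} (v : Fin d → Fin n) (hv : Injective v)
    (g : (Fin d → Fin n) → ℝ) (hg : ∀ w, ¬ Injective w → g w = 0) :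
    ∑ π : Equiv.Perm (Fin n), g (fun k => π (v k))
      = ((n - d).factorial : ℝ) * ∑ w : Fin d → Fin n, g w := by
  classical
  rw [← Finset.sum_fiberwise_of_maps_to' (g := fun π : Equiv.Perm (Fin n) => fun k => π (v k))
    (t := (Finset.univ : Finset (Fin d → Fin n))) (fun _ _ => Finset.mem_univ _) g,
    Finset.mul_sum]
  refine Finset.sum_congr rfl fun w _ => ?_
  rw [Finset.sum_const, nsmul_eq_mul]
  by_cases hw : Injective w
  · have hfil : (Finset.univ.filter (fun π : Equiv.Perm (Fin n) => (fun k => π (v k)) = w))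
        = (Finset.univ.filter (fun π : Equiv.Perm (Fin n) => ∀ k, π (v k) = w k)) := by
      ext π; simp [funext_iff]
    rw [hfil, expAux_card_fiber v w hv hw]
  · rw [hg w hw, mul_zero, mul_zero]

lemma expAux_card_inj_into {n : ℕ} (T : Finset (Fin n)) (d : ℕ) :
    ∑ w : Fin d → Fin n, (if Injective w ∧ ∀ k, w k ∈ T then (1 : ℝ) else 0)
      = (T.card.descFactorial d : ℝ) := by
  classical
  rw [Finset.sum_boole]
  norm_cast
  rw [← Fintype.card_subtype]
  have E : {w : Fin d → Fin n // Injective w ∧ ∀ k, w k ∈ T} ≃ (Fin d ↪ {x // x ∈ T}) :=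
    { toFun := fun w => ⟨fun k => ⟨w.1 k, w.2.2 k⟩,
        fun a b h => w.2.1 (congrArg Subtype.val h)⟩
      invFun := fun e => ⟨fun k => (e k : Fin n),
        ⟨fun a b h => e.injective (Subtype.ext h), fun k => (e k).2⟩⟩
      left_inv := fun w => rfl
      right_inv := fun e => by ext k; rfl }
  rw [Fintype.card_congr E, Fintype.card_embedding_eq, Fintype.card_coe, Fintype.card_fin]

lemma expAux_sum_indicator_perm {n : ℕ} (T : Finset (Fin n)) {d : ℕ} (v : Fin d → Fin n)
    (hv : Injective v) :
    ∑ π : Equiv.Perm (Fin n), (if ∀ k, π (v k) ∈ T then (1 : ℝ) else 0)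
      = (T.card.descFactorial d : ℝ) * ((n - d).factorial : ℝ) := by
  classical
  have h := expAux_sum_perm_comp v hv
    (fun w => if Injective w ∧ ∀ k, w k ∈ T then (1 : ℝ) else 0)
    (fun w hw => by simp [hw])
  have hL : ∑ π : Equiv.Perm (Fin n), (if ∀ k, π (v k) ∈ T then (1 : ℝ) else 0)
      = ∑ π : Equiv.Perm (Fin n),
        (if Injective (fun k => π (v k)) ∧ ∀ k, π (v k) ∈ T then (1 : ℝ) else 0) := by
    refine Finset.sum_congr rfl fun π _ => ?_
    have : Injective (fun k => π (v k)) := π.injective.comp hv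
    simp [this]
  rw [hL, h, expAux_card_inj_into, mul_comm]

lemma expAux_sum_indicator_perm_finset {n : ℕ} (T s : Finset (Fin n)) :
    ∑ π : Equiv.Perm (Fin n), (if ∀ x ∈ s, π x ∈ T then (1 : ℝ) else 0)
      = (T.card.descFactorial s.card : ℝ) * ((n - s.card).factorial : ℝ) := by
  classical
  have hv : Injective (fun k : Fin s.card => ((s.equivFin.symm k : Fin n))) :=
    Subtype.val_injective.comp s.equivFin.symm.injective
  rw [← expAux_sum_indicator_perm T _ hv]
  refine Finset.sum_congr rfl fun π _ => ?_
  refine if_congr ⟨fun h k => h _ (s.equivFin.symm k).2, fun h x hx => ?_⟩ rfl rfl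
  have := h (s.equivFin ⟨x, hx⟩)
  simpa using this

lemma expAux_sum_comm5 {α : Type*} [Fintype α] {P : Type*} [Fintype P]
    (f : P → α → α → α → α → ℝ) :
    ∑ π : P, ∑ a : α, ∑ c : α, ∑ b : α, ∑ d : α, f π a c b d
      = ∑ a : α, ∑ c : α, ∑ b : α, ∑ d : α, ∑ π : P, f π a c b d := by
  rw [Finset.sum_comm]
  refine Finset.sum_congr rfl fun a _ => ?_
  rw [Finset.sum_comm]
  refine Finset.sum_congr rfl fun c _ => ?_
  rw [Finset.sum_comm]
  refine Finset.sum_congr rfl fun b _ => ?_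
  rw [Finset.sum_comm]

end Aux

/-- Sum of `K₁ i j * K₂ u v` over ordered pairs `(i,j)` and `(u,v)` of distinct
indices whose underlying sets `{i,j}` and `{u,v}` overlap in exactly `m` elements. -/
noncomputable def overlapSum (n m : ℕ) (K₁ K₂ : Fin n → Fin n → ℝ) : ℝ :=
  ∑ i : Fin n, ∑ j : Fin n, ∑ u : Fin n, ∑ v : Fin n,
    if i ≠ j ∧ u ≠ v ∧ (({i, j} ∩ {u, v} : Finset (Fin n)).card = m)
    then K₁ i j * K₂ u v else 0

set_option maxHeartbeats 2000000 in
theorem expectation_alpha_mul_alpha (n t : ℕ) (hn : 4 ≤ n) (ht : 4 ≤ t) (htn : t ≤ n)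
    (K₁ K₂ : Fin n → Fin n → ℝ)
    (hsymm₁ : ∀ i j, K₁ i j = K₁ j i) (hdiag₁ : ∀ i, K₁ i i = 0)
    (hsymm₂ : ∀ i j, K₂ i j = K₂ j i) (hdiag₂ : ∀ i, K₂ i i = 0) :
    ((t : ℝ) ^ 2 * ((t : ℝ) - 1) ^ 2) *
        permExp n (fun π => alphaStat n t K₁ π * alphaStat n t K₂ π)
    = (((t : ℝ) * ((t : ℝ) - 1)) / ((n : ℝ) * ((n : ℝ) - 1))) *
        overlapSum n 2 K₁ K₂
      + (((t : ℝ) * ((t : ℝ) - 1)) / ((n : ℝ) * ((n : ℝ) - 1)) * (((t : ℝ) - 2) / ((n : ℝ) - 2))) *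
        overlapSum n 1 K₁ K₂
      + (((t : ℝ) * ((t : ℝ) - 1)) / ((n : ℝ) * ((n : ℝ) - 1)) * (((t : ℝ) - 2) / ((n : ℝ) - 2))
          * (((t : ℝ) - 3) / ((n : ℝ) - 3))) *
        overlapSum n 0 K₁ K₂ := by
  classical
  have ht4 : (4 : ℝ) ≤ (t : ℝ) := by exact_mod_cast ht
  have hn4 : (4 : ℝ) ≤ (n : ℝ) := by exact_mod_cast hn
  have ht0 : (t : ℝ) ≠ 0 := by linarith
  have ht1 : (t : ℝ) - 1 ≠ 0 := by linarith
  have hn0 : (n : ℝ) ≠ 0 := by linarith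
  have hn1 : (n : ℝ) - 1 ≠ 0 := by linarith
  have hn2 : (n : ℝ) - 2 ≠ 0 := by linarith
  have hn3 : (n : ℝ) - 3 ≠ 0 := by linarith
  set T : Finset (Fin n) := Finset.univ.filter (fun x : Fin n => (x : ℕ) < t) with hT
  have hTcard : T.card = t := by
    rcases eq_or_lt_of_le htn with rfl | h
    · simp [hT, Fin.is_lt, Finset.filter_true_of_mem]
    · have : T = Finset.Iio ⟨t, h⟩ := by ext x; simp [hT, Fin.lt_def]
      rw [this, Fin.card_Iio]
  -- the weight function
  set W : ℕ → ℝ := fun m =>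
    (t.descFactorial (4 - m) : ℝ) * ((n - (4 - m)).factorial : ℝ) with hW
  -- Step A: product of alphas as a quadruple sum
  set G : Equiv.Perm (Fin n) → ℝ := fun π =>
    ∑ i : Fin n, ∑ u : Fin n, ∑ j : Fin n, ∑ v : Fin n,
      if (i ≠ j ∧ (i : ℕ) < t ∧ (j : ℕ) < t) ∧ (u ≠ v ∧ (u : ℕ) < t ∧ (v : ℕ) < t)
      then K₁ (π i) (π j) * K₂ (π u) (π v) else 0 with hG
  have stepA : ∀ π, ((t : ℝ) ^ 2 * ((t : ℝ) - 1) ^ 2) *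
      (alphaStat n t K₁ π * alphaStat n t K₂ π) = G π := by
    intro π
    unfold alphaStat
    set S₁ := ∑ i : Fin n, ∑ j : Fin n,
        if i ≠ j ∧ (i : ℕ) < t ∧ (j : ℕ) < t then K₁ (π i) (π j) else 0 with hS₁
    set S₂ := ∑ i : Fin n, ∑ j : Fin n,
        if i ≠ j ∧ (i : ℕ) < t ∧ (j : ℕ) < t then K₂ (π i) (π j) else 0 with hS₂
    have hc : ((t : ℝ) ^ 2 * ((t : ℝ) - 1) ^ 2) *
        ((1 / ((t : ℝ) * ((t : ℝ) - 1))) * (1 / ((t : ℝ) * ((t : ℝ) - 1)))) = 1 := by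
      field_simp
    calc ((t : ℝ) ^ 2 * ((t : ℝ) - 1) ^ 2) *
        (((1 / ((t : ℝ) * ((t : ℝ) - 1))) * S₁) * ((1 / ((t : ℝ) * ((t : ℝ) - 1))) * S₂))
        = (((t : ℝ) ^ 2 * ((t : ℝ) - 1) ^ 2) *
          ((1 / ((t : ℝ) * ((t : ℝ) - 1))) * (1 / ((t : ℝ) * ((t : ℝ) - 1))))) * (S₁ * S₂) := by
          ring
      _ = S₁ * S₂ := by rw [hc, one_mul]
      _ = G π := by
          rw [hS₁, hS₂, hG, Finset.sum_mul_sum]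
          refine Finset.sum_congr rfl fun i _ => Finset.sum_congr rfl fun u _ => ?_
          rw [Finset.sum_mul_sum]
          exact Finset.sum_congr rfl fun j _ => Finset.sum_congr rfl fun v _ =>
            ite_zero_mul_ite_zero ..
  -- Step B: reindex by π
  have stepB : ∀ π : Equiv.Perm (Fin n), G π
      = ∑ a : Fin n, ∑ c : Fin n, ∑ b : Fin n, ∑ d : Fin n,
        (if a ≠ b ∧ c ≠ d then K₁ a b * K₂ c d else 0) *
        (if (π.symm a : ℕ) < t ∧ (π.symm b : ℕ) < t ∧ (π.symm c : ℕ) < t ∧ (π.symm d : ℕ) < t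
        then 1 else 0) := by
    intro π
    rw [hG]
    have step1 : ∀ (i u j v : Fin n),
        (if (i ≠ j ∧ (i : ℕ) < t ∧ (j : ℕ) < t) ∧ (u ≠ v ∧ (u : ℕ) < t ∧ (v : ℕ) < t)
        then K₁ (π i) (π j) * K₂ (π u) (π v) else 0)
        = (if π i ≠ π j ∧ π u ≠ π v then K₁ (π i) (π j) * K₂ (π u) (π v) else 0) *
          (if (π.symm (π i) : ℕ) < t ∧ (π.symm (π j) : ℕ) < t ∧ (π.symm (π u) : ℕ) < t
              ∧ (π.symm (π v) : ℕ) < t then 1 else 0) := by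
      intro i u j v
      rw [ite_zero_mul_ite_zero]
      refine if_congr ?_ (mul_one _).symm rfl
      simp only [ne_eq, EmbeddingLike.apply_eq_iff_eq, Equiv.symm_apply_apply]
      tauto
    simp only [step1]
    exact Fintype.sum_equiv π _ _ fun i => Fintype.sum_equiv π _ _ fun u =>
      Fintype.sum_equiv π _ _ fun j => Fintype.sum_equiv π _ _ fun v => rfl
  -- Step D: permutation count
  have stepD : ∀ a b c d : Fin n, a ≠ b → c ≠ d →
      ∑ π : Equiv.Perm (Fin n),
        (if (π.symm a : ℕ) < t ∧ (π.symm b : ℕ) < t ∧ (π.symm c : ℕ) < t ∧ (π.symm d : ℕ) < t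
        then (1:ℝ) else 0)
      = W (({a, b} ∩ {c, d} : Finset (Fin n)).card) := by
    intro a b c d hab hcd
    set s : Finset (Fin n) := {a, b, c, d} with hs
    have hscard : s.card = 4 - ({a, b} ∩ {c, d} : Finset (Fin n)).card := by
      have hu : s = ({a, b} : Finset (Fin n)) ∪ {c, d} := by
        ext x; simp [hs]; tauto
      have h2 : ({a, b} : Finset (Fin n)).card = 2 := by
        rw [Finset.card_insert_of_notMem (by simpa using hab), Finset.card_singleton]
      have h2' : ({c, d} : Finset (Fin n)).card = 2 := by
        rw [Finset.card_insert_of_notMem (by simpa using hcd), Finset.card_singleton]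
      have := Finset.card_union_add_card_inter ({a, b} : Finset (Fin n)) {c, d}
      have hle : (({a, b} ∩ {c, d} : Finset (Fin n))).card ≤ 2 := by
        rw [← h2]; exact Finset.card_le_card (Finset.inter_subset_left)
      rw [hu]
      omega
    have hcond : ∀ π : Equiv.Perm (Fin n),
        (((π.symm a : ℕ) < t ∧ (π.symm b : ℕ) < t ∧ (π.symm c : ℕ) < t ∧ (π.symm d : ℕ) < t)
          ↔ ∀ x ∈ s, π.symm x ∈ T) := by
      intro π
      simp only [hs, hT, Finset.mem_insert, Finset.mem_singleton, Finset.mem_filter,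
        Finset.mem_univ, true_and]
      constructor
      · rintro ⟨h1, h2, h3, h4⟩ x (rfl | rfl | rfl | rfl) <;> assumption
      · intro h
        exact ⟨h a (by tauto), h b (by tauto), h c (by tauto), h d (by tauto)⟩
    calc ∑ π : Equiv.Perm (Fin n),
        (if (π.symm a : ℕ) < t ∧ (π.symm b : ℕ) < t ∧ (π.symm c : ℕ) < t ∧ (π.symm d : ℕ) < t
        then (1:ℝ) else 0)
        = ∑ π : Equiv.Perm (Fin n), (if ∀ x ∈ s, π.symm x ∈ T then (1:ℝ) else 0) := by
          exact Finset.sum_congr rfl fun π _ => if_congr (hcond π) rfl rfl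
      _ = ∑ π : Equiv.Perm (Fin n), (if ∀ x ∈ s, π x ∈ T then (1:ℝ) else 0) := by
          have := Equiv.sum_comp (Equiv.inv (Equiv.Perm (Fin n)))
            (fun π : Equiv.Perm (Fin n) => if ∀ x ∈ s, π x ∈ T then (1:ℝ) else 0)
          simpa using this
      _ = W (({a, b} ∩ {c, d} : Finset (Fin n)).card) := by
          rw [expAux_sum_indicator_perm_finset, hTcard, hscard, hW]
  -- Step C + E : sum over permutations of G
  have stepCE : ∑ π : Equiv.Perm (Fin n), G π
      = W 2 * overlapSum n 2 K₁ K₂ + W 1 * overlapSum n 1 K₁ K₂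
        + W 0 * overlapSum n 0 K₁ K₂ := by
    have h1 : ∑ π : Equiv.Perm (Fin n), G π
        = ∑ a : Fin n, ∑ c : Fin n, ∑ b : Fin n, ∑ d : Fin n,
          ∑ π : Equiv.Perm (Fin n),
          (if a ≠ b ∧ c ≠ d then K₁ a b * K₂ c d else 0) *
          (if (π.symm a : ℕ) < t ∧ (π.symm b : ℕ) < t ∧ (π.symm c : ℕ) < t
              ∧ (π.symm d : ℕ) < t then 1 else 0) := by
      rw [Finset.sum_congr rfl fun π _ => stepB π]
      exact expAux_sum_comm5 _
    have h2 : ∀ a c b d : Fin n,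
        (∑ π : Equiv.Perm (Fin n),
          (if a ≠ b ∧ c ≠ d then K₁ a b * K₂ c d else 0) *
          (if (π.symm a : ℕ) < t ∧ (π.symm b : ℕ) < t ∧ (π.symm c : ℕ) < t
              ∧ (π.symm d : ℕ) < t then 1 else 0))
        = W 2 * (if a ≠ b ∧ c ≠ d ∧ (({a, b} ∩ {c, d} : Finset (Fin n)).card = 2)
            then K₁ a b * K₂ c d else 0)
          + W 1 * (if a ≠ b ∧ c ≠ d ∧ (({a, b} ∩ {c, d} : Finset (Fin n)).card = 1)
            then K₁ a b * K₂ c d else 0)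
          + W 0 * (if a ≠ b ∧ c ≠ d ∧ (({a, b} ∩ {c, d} : Finset (Fin n)).card = 0)
            then K₁ a b * K₂ c d else 0) := by
      intro a c b d
      rw [← Finset.mul_sum]
      by_cases hQ : a ≠ b ∧ c ≠ d
      · rw [stepD a b c d hQ.1 hQ.2]
        have hle : (({a, b} ∩ {c, d} : Finset (Fin n))).card ≤ 2 := by
          calc (({a, b} ∩ {c, d} : Finset (Fin n))).card
              ≤ ({a, b} : Finset (Fin n)).card := Finset.card_le_card Finset.inter_subset_left
            _ ≤ 2 := Finset.card_insert_le _ _ |>.trans (by simp)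
        interval_cases h : (({a, b} ∩ {c, d} : Finset (Fin n))).card <;>
          simp [hQ.1, hQ.2, h] <;> ring
      · simp only [if_neg hQ, zero_mul]
        have : ∀ m : ℕ, (if a ≠ b ∧ c ≠ d ∧ (({a, b} ∩ {c, d} : Finset (Fin n)).card = m)
            then K₁ a b * K₂ c d else 0) = 0 := by
          intro m
          rw [if_neg]
          tauto
        rw [this 2, this 1, this 0]
        ring
    have h3 : ∀ m : ℕ,
        (∑ a : Fin n, ∑ c : Fin n, ∑ b : Fin n, ∑ d : Fin n,
          (if a ≠ b ∧ c ≠ d ∧ (({a, b} ∩ {c, d} : Finset (Fin n)).card = m)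
            then K₁ a b * K₂ c d else 0)) = overlapSum n m K₁ K₂ := by
      intro m
      unfold overlapSum
      exact Finset.sum_congr rfl fun a _ => Finset.sum_comm
    rw [h1]
    simp only [h2]
    rw [← h3 2, ← h3 1, ← h3 0]
    simp only [Finset.sum_add_distrib, Finset.mul_sum]
  -- putting it together
  have hcardperm : ((Fintype.card (Equiv.Perm (Fin n)) : ℕ) : ℝ) = (n.factorial : ℝ) := by
    rw [Fintype.card_perm, Fintype.card_fin]
  have main : ((t : ℝ) ^ 2 * ((t : ℝ) - 1) ^ 2) *
      permExp n (fun π => alphaStat n t K₁ π * alphaStat n t K₂ π)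
      = (W 2 * overlapSum n 2 K₁ K₂ + W 1 * overlapSum n 1 K₁ K₂
        + W 0 * overlapSum n 0 K₁ K₂) / (n.factorial : ℝ) := by
    unfold permExp
    rw [← stepCE, hcardperm, ← mul_div_assoc, Finset.mul_sum]
    congr 1
    exact Finset.sum_congr rfl fun π _ => stepA π
  rw [main]
  -- coefficient arithmetic
  have hfacne : ∀ k : ℕ, ((k.factorial : ℕ) : ℝ) ≠ 0 :=
    fun k => Nat.cast_ne_zero.2 (Nat.factorial_ne_zero k)
  have coeff : ∀ d : ℕ, d ≤ n →
      ((t.descFactorial d : ℝ) * ((n - d).factorial : ℝ)) / (n.factorial : ℝ)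
      = (t.descFactorial d : ℝ) / (n.descFactorial d : ℝ) := by
    intro d hd
    have h1 : ((n - d).factorial : ℝ) * (n.descFactorial d : ℝ) = (n.factorial : ℝ) := by
      exact_mod_cast congrArg (fun x : ℕ => (x : ℝ)) (Nat.factorial_mul_descFactorial hd)
    rw [← h1]
    have h2 : ((n - d).factorial : ℝ) ≠ 0 := hfacne _
    have h3 : (n.descFactorial d : ℝ) ≠ 0 := by
      apply Nat.cast_ne_zero.2
      intro h0
      rw [Nat.descFactorial_eq_zero_iff_lt] at h0
      omega
    field_simp
  have cast2 : ∀ m : ℕ, 4 ≤ m → ((m.descFactorial 2 : ℕ) : ℝ) = (m : ℝ) * ((m : ℝ) - 1) := by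
    intro m _
    exact_mod_cast Nat.cast_descFactorial_two (S := ℝ) m
  have cast3 : ∀ m : ℕ, 4 ≤ m →
      ((m.descFactorial 3 : ℕ) : ℝ) = ((m : ℝ) - 2) * ((m : ℝ) * ((m : ℝ) - 1)) := by
    intro m hm
    rw [show (3 : ℕ) = 2 + 1 from rfl, Nat.descFactorial_succ, Nat.cast_mul,
      Nat.cast_sub (by omega : 2 ≤ m), cast2 m hm]
    push_cast
    ring
  have cast4 : ∀ m : ℕ, 4 ≤ m →
      ((m.descFactorial 4 : ℕ) : ℝ)
        = ((m : ℝ) - 3) * (((m : ℝ) - 2) * ((m : ℝ) * ((m : ℝ) - 1))) := by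
    intro m hm
    rw [show (4 : ℕ) = 3 + 1 from rfl, Nat.descFactorial_succ, Nat.cast_mul,
      Nat.cast_sub (by omega : 3 ≤ m), cast3 m hm]
    push_cast
    ring
  have hW2 : W 2 / (n.factorial : ℝ) = ((t : ℝ) * ((t : ℝ) - 1)) / ((n : ℝ) * ((n : ℝ) - 1)) := by
    rw [hW]
    simp only [show (4 : ℕ) - 2 = 2 from rfl]
    rw [coeff 2 (by omega), cast2 t ht, cast2 n hn]
  have hW1 : W 1 / (n.factorial : ℝ)
      = ((t : ℝ) * ((t : ℝ) - 1)) / ((n : ℝ) * ((n : ℝ) - 1)) * (((t : ℝ) - 2) / ((n : ℝ) - 2)) := by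
    rw [hW]
    simp only [show (4 : ℕ) - 1 = 3 from rfl]
    rw [coeff 3 (by omega), cast3 t ht, cast3 n hn]
    field_simp
  have hW0 : W 0 / (n.factorial : ℝ)
      = ((t : ℝ) * ((t : ℝ) - 1)) / ((n : ℝ) * ((n : ℝ) - 1)) * (((t : ℝ) - 2) / ((n : ℝ) - 2))
        * (((t : ℝ) - 3) / ((n : ℝ) - 3)) := by
    rw [hW]
    simp only [show (4 : ℕ) - 0 = 4 from rfl]
    rw [coeff 4 (by omega), cast4 t ht, cast4 n hn]
    field_simp
  calc (W 2 * overlapSum n 2 K₁ K₂ + W 1 * overlapSum n 1 K₁ K₂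
        + W 0 * overlapSum n 0 K₁ K₂) / (n.factorial : ℝ)
      = (W 2 / (n.factorial : ℝ)) * overlapSum n 2 K₁ K₂
        + (W 1 / (n.factorial : ℝ)) * overlapSum n 1 K₁ K₂
        + (W 0 / (n.factorial : ℝ)) * overlapSum n 0 K₁ K₂ := by ring
    _ = _ := by rw [hW2, hW1, hW0]
end
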